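/- arXiv:2401.01791 — 10 statements merged into one kernel-verified Lean document; each statement's English description precedes it below -/
import Mathlib

section
/- If an optimistic certificate for view v exists (2f+1 optimistic votes), and every honest node that sends an optimistic vote in view v never afterwards sends a timeout message for view v-1, and honest optimistic voters have not previously sent a timeout for v-1, then no timeout certificate for view v-1 (2f+1 timeout messages) exists. -/
open Finset

theorem Finset.exists_mem_inter_of_card_add_card_sdiff_lt {α : Type*} [DecidableEq α]
    {V H S T : Finset α} (hS : S ⊆ V) (hT : T ⊆ V) (hcard : #V + #(V \ H) < #S + #T) :
    ∃ x ∈ S, x ∈ T ∧ x ∈ H := by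
  -- Discarding the members of `V \ H` from `S` leaves it too large to be disjoint from `T`.
  have hSH : #S ≤ #(S \ (V \ H)) + #(V \ H) := card_le_card_sdiff_add_card
  obtain ⟨x, hx⟩ :=
    inter_nonempty_of_card_lt_card_add_card (s := V) (t := S \ (V \ H)) (sdiff_subset.trans hS) hT
      (by omega)
  simp only [mem_inter, mem_sdiff, not_and, not_not] at hx
  exact ⟨x, hx.1.1, hx.2, hx.1.2 (hS hx.1.1)⟩

theorem stmt4_general {α : Type*} [DecidableEq α] (f : ℕ)
    (V honest : Finset α)
    (hV : V.card = 3 * f + 1)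
    (hbyz : (V \ honest).card ≤ f)
    (optVote timeoutPrev : α → Prop)
    (hrule : ∀ i ∈ honest, optVote i → ¬ timeoutPrev i)
    (hOC : ∃ S : Finset α, S ⊆ V ∧ 2 * f + 1 ≤ S.card ∧ ∀ i ∈ S, optVote i) :
    ¬ ∃ S : Finset α, S ⊆ V ∧ 2 * f + 1 ≤ S.card ∧ ∀ i ∈ S, timeoutPrev i := by
  rintro ⟨T, hTV, hTcard, hTtimeout⟩
  obtain ⟨S, hSV, hScard, hSvote⟩ := hOC
  obtain ⟨i, hiS, hiT, hi⟩ :=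
    exists_mem_inter_of_card_add_card_sdiff_lt (H := honest) hSV hTV (by omega)
  exact hrule i hi (hSvote i hiS) (hTtimeout i hiT)

/-- If an optimistic certificate for view `v` exists and honest optimistic voters for `v`
never send a timeout for view `v-1`, then no timeout certificate for view `v-1` exists. -/
theorem stmt4 {α : Type*} [DecidableEq α] (f : ℕ)
    (V honest : Finset α)
    (hV : V.card = 3 * f + 1)
    (hhon : honest ⊆ V)
    (hbyz : (V \ honest).card ≤ f)
    (optVote timeoutPrev : α → Prop)
    (hrule : ∀ i ∈ honest, optVote i → ¬ timeoutPrev i)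
    (hOC : ∃ S : Finset α, S ⊆ V ∧ 2 * f + 1 ≤ S.card ∧ ∀ i ∈ S, optVote i) :
    ¬ ∃ S : Finset α, S ⊆ V ∧ 2 * f + 1 ≤ S.card ∧ ∀ i ∈ S, timeoutPrev i :=
  stmt4_general f V honest hV hbyz optVote timeoutPrev hrule hOC
end

section
/- If an optimistic certificate and a normal certificate both exist for view v, then they certify the same block, given that every honest node sends at most one optimistic vote and at most one normal vote per view, an honest node only optimistic-votes if it has not yet voted in v, and an honest node only normal-votes for a block B if it has not optimistic-voted for a block different from B in v. -/
/-!
Two quorums of `2f + 1` among `3f + 1` nodes share `f + 1` nodes, so at least one honest node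
lies in both certificates. That node optimistic-voted for `B1` and normal-voted for `B2`, and the
normal-voting rule forces `B1 = B2`.
-/

open Finset

theorem Finset.inter_inter_nonempty_of_card_add_card_sdiff_lt {α : Type*} [DecidableEq α]
    {V H S T : Finset α} (hS : S ⊆ V) (hT : T ⊆ V) (hcard : #V + #(V \ H) < #S + #T) :
    (S ∩ T ∩ H).Nonempty := by
  have hunion : #(S ∪ T) ≤ #V := card_le_card (union_subset hS hT)
  have hnot_byz : ¬ S ∩ T ⊆ V \ H := fun h => by
    have := card_le_card h
    have := card_union_add_card_inter S T
    omega
  obtain ⟨i, hiST, hiH⟩ := not_subset.mp hnot_byz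
  have hiV : i ∈ V := hS (mem_inter.mp hiST).1
  exact ⟨i, mem_inter.mpr ⟨hiST, by simpa [hiV] using hiH⟩⟩

theorem stmt5_general {α Block : Type*} [DecidableEq α] (f : ℕ)
    (V honest : Finset α)
    (hV : V.card = 3 * f + 1)
    (hbyz : (V \ honest).card ≤ f)
    (optVote normVote : α → Block → Prop)
    (hnorm_rule : ∀ i ∈ honest, ∀ B, normVote i B → ∀ B', optVote i B' → B' = B)
    (B1 B2 : Block)
    (hOpt : ∃ S : Finset α, S ⊆ V ∧ 2 * f + 1 ≤ S.card ∧ ∀ i ∈ S, optVote i B1)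
    (hNorm : ∃ S : Finset α, S ⊆ V ∧ 2 * f + 1 ≤ S.card ∧ ∀ i ∈ S, normVote i B2) :
    B1 = B2 := by
  obtain ⟨S, hSV, hScard, hSopt⟩ := hOpt
  obtain ⟨T, hTV, hTcard, hTnorm⟩ := hNorm
  obtain ⟨i, hi⟩ :=
    inter_inter_nonempty_of_card_add_card_sdiff_lt (H := honest) hSV hTV (by omega)
  obtain ⟨⟨hiS, hiT⟩, hi_honest⟩ := by simpa only [mem_inter] using hi
  exact hnorm_rule i hi_honest B2 (hTnorm i hiT) B1 (hSopt i hiS)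

/-- Optimistic equivalence: if an optimistic certificate for `(v, B1)` and a normal
certificate for `(v, B2)` both exist then `B1 = B2`, given the honest voting constraints. -/
theorem stmt5 {α Block : Type*} [DecidableEq α] (f : ℕ)
    (V honest : Finset α)
    (hV : V.card = 3 * f + 1)
    (hhon : honest ⊆ V)
    (hbyz : (V \ honest).card ≤ f)
    (optVote normVote : α → Block → Prop)
    (hopt_once : ∀ i ∈ honest, ∀ B B', optVote i B → optVote i B' → B = B')
    (hnorm_once : ∀ i ∈ honest, ∀ B B', normVote i B → normVote i B' → B = B')
    (hnorm_rule : ∀ i ∈ honest, ∀ B, normVote i B → ∀ B', optVote i B' → B' = B)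
    (B1 B2 : Block)
    (hOpt : ∃ S : Finset α, S ⊆ V ∧ 2 * f + 1 ≤ S.card ∧ ∀ i ∈ S, optVote i B1)
    (hNorm : ∃ S : Finset α, S ⊆ V ∧ 2 * f + 1 ≤ S.card ∧ ∀ i ∈ S, normVote i B2) :
    B1 = B2 :=
  stmt5_general f V honest hV hbyz optVote normVote hnorm_rule B1 B2 hOpt hNorm
end

section
/- Safety of chained commits: if unique extensibility holds (every block certified for a view v' ≥ v extends the block committed for view v), any two honest nodes that commit blocks at the same chain height commit the same block. -/
/-!
Ancestry along a parent map is right-unique, so any two ancestors of one block are comparable;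
since heights drop by one along each parent step, comparable blocks of equal height coincide.
Unique extensibility makes the directly committed block with the larger view a common
descendant of both committed blocks, which are then ancestors of one block at the same height.
-/

namespace ParentChain

open Relation

variable {α : Type*} {parent : α → Option α} {height : α → ℕ}

theorem rightUnique_parent : Relator.RightUnique (fun a b : α => parent a = some b) :=
  fun _ _ _ hb hc => Option.some.inj (hb.symm.trans hc)

theorem height_le_of_reflTransGen
    (hheight : ∀ B B', parent B = some B' → height B = height B' + 1) {X A : α}
    (h : ReflTransGen (fun a b => parent a = some b) X A) : height A ≤ height X := by
  induction h with
  | refl => exact le_rfl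
  | tail _ hstep ih => have := hheight _ _ hstep; omega

theorem eq_of_reflTransGen_of_height_eq
    (hheight : ∀ B B', parent B = some B' → height B = height B' + 1) {A B : α}
    (h : ReflTransGen (fun a b => parent a = some b) A B) (hAB : height A = height B) :
    A = B := by
  rcases h.cases_head with rfl | ⟨Y, hAY, hYB⟩
  · rfl
  · have := height_le_of_reflTransGen hheight hYB
    have := hheight _ _ hAY
    omega

theorem eq_of_common_descendant_of_height_eq
    (hheight : ∀ B B', parent B = some B' → height B = height B' + 1) {X A B : α}
    (hA : ReflTransGen (fun a b => parent a = some b) X A)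
    (hB : ReflTransGen (fun a b => parent a = some b) X B) (hAB : height A = height B) :
    A = B := by
  rcases hA.total_of_right_unique rightUnique_parent hB with hAB' | hBA
  · exact eq_of_reflTransGen_of_height_eq hheight hAB' hAB
  · exact (eq_of_reflTransGen_of_height_eq hheight hBA hAB.symm).symm

end ParentChain

/-- Safety of chained commits: under unique extensibility of directly committed blocks,
any two honest nodes that commit blocks at the same chain height commit the same block. -/
theorem stmt8 {Node Block : Type*} (parent : Block → Option Block) (height : Block → ℕ)
    (hheight : ∀ B B', parent B = some B' → height B = height B' + 1)
    (ext : Block → Block → Prop)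
    (hext : ext = Relation.ReflTransGen (fun a b => parent a = some b))
    (dc : Node → Block → ℕ → Prop)  -- `dc i B v`: node `i` directly commits `B` certified for view `v`
    (huniq : ∀ i j Bl Bm v v', dc i Bl v → dc j Bm v' → v ≤ v' → ext Bm Bl)
    (i j : Node) (B B' : Block) (k : ℕ)
    (hi : ∃ Bl v, dc i Bl v ∧ ext Bl B) (hB : height B = k)
    (hj : ∃ Bm v', dc j Bm v' ∧ ext Bm B') (hB' : height B' = k) :
    B = B' := by
  subst hext
  obtain ⟨Bl, v, hdl, hlB⟩ := hi
  obtain ⟨Bm, v', hdm, hmB'⟩ := hj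
  have hheights : height B = height B' := hB.trans hB'.symm
  rcases le_total v v' with hvv' | hv'v
  · have hml := huniq i j Bl Bm v v' hdl hdm hvv'
    exact ParentChain.eq_of_common_descendant_of_height_eq hheight (hml.trans hlB) hmB' hheights
  · have hlm := huniq j i Bm Bl v' v hdm hdl hv'v
    exact ParentChain.eq_of_common_descendant_of_height_eq hheight hlB (hlm.trans hmB') hheights
end

section
/- Per-view uniqueness for Pipelined Moonshot: under the three vote types (optimistic, normal, fallback) with the stated honest-voting constraints, if two block certificates exist for the same view v then they certify the same block. -/
/-!
Two sets of `2f+1` out of `3f+1` nodes overlap in at least `f+1` nodes, hence in an honest one.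
An honest node in the overlap of the two certificates' quorums voted for both blocks, and the
voting rules make its two votes agree, with one exception: an optimistic and a fallback vote.
That combination cannot occur at all once an optimistic certificate exists, because an honest
fallback voter has seen a timeout certificate for `v-1`, whose quorum meets the optimistic quorum
in an honest node that both timed out and voted optimistically.
-/

namespace Finset

variable {α : Type*} [DecidableEq α]

lemma exists_mem_mem_mem_of_card_add_lt {S T V H : Finset α} (hS : S ⊆ V) (hT : T ⊆ V)
    (hcard : V.card + (V \ H).card < S.card + T.card) : ∃ i ∈ H, i ∈ S ∧ i ∈ T := by
  have hST : S.card + T.card ≤ V.card + (S ∩ T).card :=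
    card_union_add_card_inter S T ▸ Nat.add_le_add_right (card_le_card (union_subset hS hT)) _
  have hout : ((S ∩ T) \ H).card ≤ (V \ H).card :=
    card_le_card (sdiff_subset_sdiff (inter_subset_left.trans hS) le_rfl)
  obtain ⟨i, hi⟩ : (S ∩ T ∩ H).Nonempty := by
    have := card_sdiff_add_card_inter (S ∩ T) H
    rw [← card_pos]
    omega
  simp only [mem_inter] at hi
  exact ⟨i, hi.2, hi.1⟩

end Finset

section

variable {α : Type*}

def HasQuorum (f : ℕ) (V : Finset α) (P : α → Prop) : Prop :=
  ∃ S ⊆ V, 2 * f + 1 ≤ S.card ∧ ∀ i ∈ S, P i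

lemma HasQuorum.exists_honest [DecidableEq α] {f : ℕ} {V honest : Finset α}
    {P Q : α → Prop} (hV : V.card = 3 * f + 1) (hbyz : (V \ honest).card ≤ f)
    (hP : HasQuorum f V P) (hQ : HasQuorum f V Q) : ∃ i ∈ honest, P i ∧ Q i := by
  obtain ⟨S, hSV, hS, hSP⟩ := hP
  obtain ⟨T, hTV, hT, hTQ⟩ := hQ
  obtain ⟨i, hi, hiS, hiT⟩ :=
    Finset.exists_mem_mem_mem_of_card_add_lt (H := honest) hSV hTV (by omega)
  exact ⟨i, hi, hSP i hiS, hTQ i hiT⟩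

end

theorem stmt9_general {α Block : Type*} [DecidableEq α] (f : ℕ)
    (V honest : Finset α)
    (hV : V.card = 3 * f + 1)
    (hbyz : (V \ honest).card ≤ f)
    (optVote normVote fbVote : α → Block → Prop)
    (timeoutPrev : α → Prop)
    -- (1) at most one vote of each type per view
    (h1o : ∀ i ∈ honest, ∀ B B', optVote i B → optVote i B' → B = B')
    (h1n : ∀ i ∈ honest, ∀ B B', normVote i B → normVote i B' → B = B')
    (h1f : ∀ i ∈ honest, ∀ B B', fbVote i B → fbVote i B' → B = B')
    -- (2) normal vote only if no optimistic vote for a different block, and never a fallback vote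
    (h2 : ∀ i ∈ honest, ∀ B, normVote i B →
        (∀ B', optVote i B' → B' = B) ∧ (∀ B', ¬ fbVote i B'))
    -- (3) fallback vote only if a timeout certificate for `v-1` exists, and never a normal vote
    (h3 : ∀ i ∈ honest, ∀ B, fbVote i B →
        (∃ T : Finset α, T ⊆ V ∧ 2 * f + 1 ≤ T.card ∧ ∀ j ∈ T, timeoutPrev j) ∧
        (∀ B', ¬ normVote i B'))
    -- (4) optimistic vote only if the node never sends a timeout for `v-1`
    (h4 : ∀ i ∈ honest, ∀ B, optVote i B → ¬ timeoutPrev i)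
    (cert : Block → Prop)
    (hcert : ∀ B, cert B ↔
        (∃ S : Finset α, S ⊆ V ∧ 2 * f + 1 ≤ S.card ∧ ∀ i ∈ S, optVote i B) ∨
        (∃ S : Finset α, S ⊆ V ∧ 2 * f + 1 ≤ S.card ∧ ∀ i ∈ S, normVote i B) ∨
        (∃ S : Finset α, S ⊆ V ∧ 2 * f + 1 ≤ S.card ∧ ∀ i ∈ S, fbVote i B))
    (B1 B2 : Block) (hc1 : cert B1) (hc2 : cert B2) :
    B1 = B2 := by
  have meet {P Q : α → Prop} (hP : HasQuorum f V P) (hQ : HasQuorum f V Q) :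
      ∃ i ∈ honest, P i ∧ Q i :=
    hP.exists_honest hV hbyz hQ
  have no_fallback {B} (hopt : HasQuorum f V (optVote · B)) :
      ∀ i ∈ honest, ∀ B', ¬ fbVote i B' := by
    intro i hi B' hfb
    obtain ⟨j, hj, hjopt, hjtimeout⟩ := meet hopt (h3 i hi B' hfb).1
    exact h4 j hj B hjopt hjtimeout
  rcases (hcert B1).1 hc1 with hq1 | hq1 | hq1 <;> rcases (hcert B2).1 hc2 with hq2 | hq2 | hq2 <;>
    obtain ⟨i, hi, hv1, hv2⟩ := meet hq1 hq2
  · exact h1o i hi B1 B2 hv1 hv2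
  · exact (h2 i hi B2 hv2).1 B1 hv1
  · exact (no_fallback hq1 i hi B2 hv2).elim
  · exact ((h2 i hi B1 hv1).1 B2 hv2).symm
  · exact h1n i hi B1 B2 hv1 hv2
  · exact ((h3 i hi B2 hv2).2 B1 hv1).elim
  · exact (no_fallback hq2 i hi B1 hv1).elim
  · exact ((h3 i hi B1 hv1).2 B2 hv2).elim
  · exact h1f i hi B1 B2 hv1 hv2

/-- Per-view uniqueness for Pipelined Moonshot: under the three vote types with the
stated honest-voting constraints, any two block certificates for the same view certify
the same block. -/
theorem stmt9 {α Block : Type*} [DecidableEq α] (f : ℕ)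
    (V honest : Finset α)
    (hV : V.card = 3 * f + 1)
    (hhon : honest ⊆ V)
    (hbyz : (V \ honest).card ≤ f)
    (optVote normVote fbVote : α → Block → Prop)
    (timeoutPrev : α → Prop)
    -- (1) at most one vote of each type per view
    (h1o : ∀ i ∈ honest, ∀ B B', optVote i B → optVote i B' → B = B')
    (h1n : ∀ i ∈ honest, ∀ B B', normVote i B → normVote i B' → B = B')
    (h1f : ∀ i ∈ honest, ∀ B B', fbVote i B → fbVote i B' → B = B')
    -- (2) normal vote only if no optimistic vote for a different block, and never a fallback vote
    (h2 : ∀ i ∈ honest, ∀ B, normVote i B →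
        (∀ B', optVote i B' → B' = B) ∧ (∀ B', ¬ fbVote i B'))
    -- (3) fallback vote only if a timeout certificate for `v-1` exists, and never a normal vote
    (h3 : ∀ i ∈ honest, ∀ B, fbVote i B →
        (∃ T : Finset α, T ⊆ V ∧ 2 * f + 1 ≤ T.card ∧ ∀ j ∈ T, timeoutPrev j) ∧
        (∀ B', ¬ normVote i B'))
    -- (4) optimistic vote only if the node never sends a timeout for `v-1`
    (h4 : ∀ i ∈ honest, ∀ B, optVote i B → ¬ timeoutPrev i)
    (cert : Block → Prop)
    (hcert : ∀ B, cert B ↔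
        (∃ S : Finset α, S ⊆ V ∧ 2 * f + 1 ≤ S.card ∧ ∀ i ∈ S, optVote i B) ∨
        (∃ S : Finset α, S ⊆ V ∧ 2 * f + 1 ≤ S.card ∧ ∀ i ∈ S, normVote i B) ∨
        (∃ S : Finset α, S ⊆ V ∧ 2 * f + 1 ≤ S.card ∧ ∀ i ∈ S, fbVote i B))
    (B1 B2 : Block) (hc1 : cert B1) (hc2 : cert B2) :
    B1 = B2 :=
  stmt9_general f V honest hV hbyz optVote normVote fbVote timeoutPrev h1o h1n h1f h2 h3 h4 cert
    hcert B1 B2 hc1 hc2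
end

section
/- If at least f+1 honest nodes hold a certificate C_v (for view v) before sending any timeout message for views ≥ v+1, and every honest timeout message includes that node's highest-ranked certificate, then every timeout certificate for any view v'' ≥ v+1 contains a certificate of rank at least v as its highest-ranked included certificate. -/
theorem stmt10_general {Node Cert : Type*} [DecidableEq Node] (f v : ℕ)
    (V honest : Finset Node)
    (hV : V.card = 3 * f + 1)
    (hhon : honest ⊆ V)
    (rank : Cert → ℕ)
    (sendsT : Node → ℕ → Cert → Prop)        -- node sends a timeout for view `w` carrying a cert
    (holdsBefore : Node → ℕ → Cert → Prop)   -- node holds a cert before sending any timeout for view `w`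
    (hcarry : ∀ i ∈ honest, ∀ w C C', sendsT i w C → holdsBefore i w C' → rank C' ≤ rank C)
    (Cv : Cert) (hCv : rank Cv = v)
    (H : Finset Node) (hH : H ⊆ honest) (hHc : f + 1 ≤ H.card)
    (hhold : ∀ i ∈ H, ∀ w, v + 1 ≤ w → holdsBefore i w Cv)
    (v'' : ℕ) (hv'' : v + 1 ≤ v'')
    (S : Finset Node) (hS : S ⊆ V) (hSc : 2 * f + 1 ≤ S.card)
    (cf : Node → Cert) (hsend : ∀ i ∈ S, sendsT i v'' (cf i)) :
    ∃ i ∈ S, v ≤ rank (cf i) := by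
  obtain ⟨i, hi⟩ :=
    Finset.inter_nonempty_of_card_lt_card_add_card hS (hH.trans hhon) (by omega)
  obtain ⟨hiS, hiH⟩ := Finset.mem_inter.mp hi
  refine ⟨i, hiS, ?_⟩
  calc v = rank Cv := hCv.symm
    _ ≤ rank (cf i) := hcarry i (hH hiH) v'' (cf i) Cv (hsend i hiS) (hhold i hiH v'' hv'')

/-- If at least `f+1` honest nodes hold a certificate of rank `v` before sending any
timeout for views `≥ v+1`, and honest timeouts carry the sender's highest-ranked
certificate, then every timeout certificate for any view `v'' ≥ v+1` includes a
certificate of rank at least `v`. -/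
theorem stmt10 {Node Cert : Type*} [DecidableEq Node] (f v : ℕ)
    (V honest : Finset Node)
    (hV : V.card = 3 * f + 1)
    (hhon : honest ⊆ V)
    (hbyz : (V \ honest).card ≤ f)
    (rank : Cert → ℕ)
    (sendsT : Node → ℕ → Cert → Prop)        -- node sends a timeout for view `w` carrying a cert
    (holdsBefore : Node → ℕ → Cert → Prop)   -- node holds a cert before sending any timeout for view `w`
    (hcarry : ∀ i ∈ honest, ∀ w C C', sendsT i w C → holdsBefore i w C' → rank C' ≤ rank C)
    (Cv : Cert) (hCv : rank Cv = v)
    (H : Finset Node) (hH : H ⊆ honest) (hHc : f + 1 ≤ H.card)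
    (hhold : ∀ i ∈ H, ∀ w, v + 1 ≤ w → holdsBefore i w Cv)
    (v'' : ℕ) (hv'' : v + 1 ≤ v'')
    (S : Finset Node) (hS : S ⊆ V) (hSc : 2 * f + 1 ≤ S.card)
    (cf : Node → Cert) (hsend : ∀ i ∈ S, sendsT i v'' (cf i)) :
    ∃ i ∈ S, v ≤ rank (cf i) :=
  stmt10_general f v V honest hV hhon rank sendsT holdsBefore hcarry Cv hCv H hH hHc hhold v'' hv''
    S hS hSc cf hsend
end

section
/- Unique extensibility for Simple Moonshot (inductive step): assume a block B_k is certified and directly committed for view v (so a child certificate for v+1 exists with at least f+1 honest voters who locked a certificate of rank ≥ v), honest normal votes in any view v' only accept proposals justified by certificates of rank at least the voter's lock and strictly less than v', honest optimistic votes in v' require a lock on a certificate for v'-1 certifying the proposed block's parent, and every certificate for views in [v, v'-1] certifies a block extending B_k. Then every block certified for view v' extends B_k. -/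
/-! A certificate for `v'` has `2f+1` voters and `H` has `f+1` honest nodes locked at rank `≥ v`,
so by quorum intersection some node of `H` voted for `B'`. Either vote rule then makes the parent
of `B'` a block certified in a view of `[v, v')`, which extends `B_k` by the induction hypothesis. -/

theorem stmt11_general {Node Block : Type*} (f v v' : ℕ)
    (V honest : Finset Node)
    (hV : V.card = 3 * f + 1)
    (hhon : honest ⊆ V)
    (parent : Block → Option Block)
    (ext : Block → Block → Prop)
    (hext : ext = Relation.ReflTransGen (fun a b => parent a = some b))
    (certified : ℕ → Block → Prop)
    (votedOpt votedNorm : Node → ℕ → Block → Prop)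
    -- a certificate for view `w` requires `2f+1` votes
    (hcertvotes : ∀ w B, certified w B →
        ∃ S : Finset Node, S ⊆ V ∧ 2 * f + 1 ≤ S.card ∧
          ∀ i ∈ S, votedOpt i w B ∨ votedNorm i w B)
    (lock : Node → ℕ)
    (Bk : Block)
    -- at least `f+1` honest nodes (the child's honest voters) hold locks of rank ≥ v
    (H : Finset Node) (hH : H ⊆ honest) (hHc : f + 1 ≤ H.card)
    (hlock : ∀ i ∈ H, v ≤ lock i)
    (hvv' : v < v')
    -- normal vote rule: justified by a certificate of rank ≥ the voter's lock and < v'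
    (hnormrule : ∀ i ∈ honest, ∀ B, votedNorm i v' B →
        ∃ r Bp, lock i ≤ r ∧ r < v' ∧ certified r Bp ∧ parent B = some Bp)
    -- optimistic vote rule: locked on a certificate for `v'-1` certifying the parent
    (hoptrule : ∀ i ∈ honest, ∀ B, votedOpt i v' B →
        ∃ Bp, certified (v' - 1) Bp ∧ parent B = some Bp)
    -- induction hypothesis: certificates for views in [v, v'-1] extend B_k
    (hIH : ∀ w B', v ≤ w → w < v' → certified w B' → ext B' Bk)
    (B' : Block) (hB' : certified v' B') :
    ext B' Bk := by
  classical
  subst hext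
  obtain ⟨S, hSV, hScard, hSvote⟩ := hcertvotes v' B' hB'
  obtain ⟨i, hi⟩ :=
    Finset.inter_nonempty_of_card_lt_card_add_card hSV (hH.trans hhon) (by omega)
  obtain ⟨hiS, hiH⟩ := Finset.mem_inter.mp hi
  have hparent : ∃ w Bp, v ≤ w ∧ w < v' ∧ certified w Bp ∧ parent B' = some Bp := by
    rcases hSvote i hiS with hopt | hnorm
    · obtain ⟨Bp, hBp, hpar⟩ := hoptrule i (hH hiH) B' hopt
      exact ⟨v' - 1, Bp, by omega, by omega, hBp, hpar⟩
    · obtain ⟨r, Bp, hlr, hrv, hBp, hpar⟩ := hnormrule i (hH hiH) B' hnorm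
      exact ⟨r, Bp, (hlock i hiH).trans hlr, hrv, hBp, hpar⟩
  obtain ⟨w, Bp, hvw, hwv', hBp, hpar⟩ := hparent
  exact .head hpar (hIH w Bp hvw hwv' hBp)

/-- Unique extensibility for Simple Moonshot (inductive step): if `B_k` is certified and
directly committed for view `v`, at least `f+1` honest voters for its child lock rank `≥ v`,
honest votes in view `v'` follow the normal/optimistic vote rules, and every certificate
for views in `[v, v'-1]` certifies a block extending `B_k`, then every block certified
for view `v'` extends `B_k`. -/
theorem stmt11 {Node Block : Type*} [DecidableEq Node] (f v v' : ℕ)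
    (V honest : Finset Node)
    (hV : V.card = 3 * f + 1)
    (hhon : honest ⊆ V)
    (hbyz : (V \ honest).card ≤ f)
    (parent : Block → Option Block)
    (ext : Block → Block → Prop)
    (hext : ext = Relation.ReflTransGen (fun a b => parent a = some b))
    (certified : ℕ → Block → Prop)
    (votedOpt votedNorm : Node → ℕ → Block → Prop)
    -- a certificate for view `w` requires `2f+1` votes
    (hcertvotes : ∀ w B, certified w B →
        ∃ S : Finset Node, S ⊆ V ∧ 2 * f + 1 ≤ S.card ∧
          ∀ i ∈ S, votedOpt i w B ∨ votedNorm i w B)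
    -- per-view certificate uniqueness
    (huniqView : ∀ w B B', certified w B → certified w B' → B = B')
    (lock : Node → ℕ)
    (Bk Bk1 : Block)
    -- `B_k` is certified for `v` and directly committed: its child is certified for `v+1`
    (hcommit : certified v Bk ∧ certified (v + 1) Bk1 ∧ parent Bk1 = some Bk)
    -- at least `f+1` honest nodes (the child's honest voters) hold locks of rank ≥ v
    (H : Finset Node) (hH : H ⊆ honest) (hHc : f + 1 ≤ H.card)
    (hlock : ∀ i ∈ H, v ≤ lock i)
    (hvv' : v < v')
    -- normal vote rule: justified by a certificate of rank ≥ the voter's lock and < v'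
    (hnormrule : ∀ i ∈ honest, ∀ B, votedNorm i v' B →
        ∃ r Bp, lock i ≤ r ∧ r < v' ∧ certified r Bp ∧ parent B = some Bp)
    -- optimistic vote rule: locked on a certificate for `v'-1` certifying the parent
    (hoptrule : ∀ i ∈ honest, ∀ B, votedOpt i v' B →
        ∃ Bp, certified (v' - 1) Bp ∧ parent B = some Bp)
    -- induction hypothesis: certificates for views in [v, v'-1] extend B_k
    (hIH : ∀ w B', v ≤ w → w < v' → certified w B' → ext B' Bk)
    (B' : Block) (hB' : certified v' B') :
    ext B' Bk :=
  stmt11_general f v v' V honest hV hhon parent ext hext certified votedOpt votedNorm hcertvotes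
    lock Bk H hH hHc hlock hvv' hnormrule hoptrule hIH B' hB'
end

section
/- Sequential progress: if an honest node enters view v (v ≥ 2), then at least f+1 honest nodes previously entered view v-1, given that entering view v requires possessing a block certificate or timeout certificate for v-1, each requiring 2f+1 distinct signed messages that honest nodes only produce while in view v-1. -/
open Finset

theorem Finset.le_card_inter_of_card_sdiff_le {α : Type*} [DecidableEq α] {S V H : Finset α}
    {a b : ℕ} (hSV : S ⊆ V) (hS : a + b ≤ #S) (hVH : #(V \ H) ≤ b) : a ≤ #(S ∩ H) := by
  have hsplit : #(S ∩ H) + #(S \ H) = #S := card_inter_add_card_sdiff S H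
  have hout : #(S \ H) ≤ #(V \ H) := card_le_card (sdiff_subset_sdiff hSV le_rfl)
  omega

theorem stmt12_general {Node : Type*} [DecidableEq Node] (f v : ℕ) (hv : 2 ≤ v)
    (V honest : Finset Node)
    (hbyz : (V \ honest).card ≤ f)
    (entered : Node → ℕ → Prop)
    (sentMsg : Node → ℕ → Prop)  -- vote or timeout message for a view
    -- honest nodes only send messages for a view while in that view
    (hmsg : ∀ i ∈ honest, ∀ w, sentMsg i w → entered i w)
    -- entering view `w` requires a certificate for `w-1`: `2f+1` messages for `w-1`
    (hentry : ∀ i ∈ honest, ∀ w, 2 ≤ w → entered i w →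
        ∃ S : Finset Node, S ⊆ V ∧ 2 * f + 1 ≤ S.card ∧ ∀ j ∈ S, sentMsg j (w - 1))
    (i : Node) (hi : i ∈ honest) (hiv : entered i v) :
    ∃ H : Finset Node, H ⊆ honest ∧ f + 1 ≤ H.card ∧ ∀ j ∈ H, entered j (v - 1) := by
  obtain ⟨S, hSV, hScard, hSmsg⟩ := hentry i hi v hv hiv
  refine ⟨S ∩ honest, inter_subset_right, le_card_inter_of_card_sdiff_le hSV (by omega) hbyz, ?_⟩
  intro j hj
  rw [mem_inter] at hj
  exact hmsg j hj.2 (v - 1) (hSmsg j hj.1)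

/-- Sequential progress: if an honest node enters view `v ≥ 2`, then at least `f+1`
honest nodes previously entered view `v-1`. -/
theorem stmt12 {Node : Type*} [DecidableEq Node] (f v : ℕ) (hv : 2 ≤ v)
    (V honest : Finset Node)
    (hV : V.card = 3 * f + 1)
    (hhon : honest ⊆ V)
    (hbyz : (V \ honest).card ≤ f)
    (entered : Node → ℕ → Prop)
    (sentMsg : Node → ℕ → Prop)  -- vote or timeout message for a view
    -- honest nodes only send messages for a view while in that view
    (hmsg : ∀ i ∈ honest, ∀ w, sentMsg i w → entered i w)
    -- entering view `w` requires a certificate for `w-1`: `2f+1` messages for `w-1`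
    (hentry : ∀ i ∈ honest, ∀ w, 2 ≤ w → entered i w →
        ∃ S : Finset Node, S ⊆ V ∧ 2 * f + 1 ≤ S.card ∧ ∀ j ∈ S, sentMsg j (w - 1))
    (i : Node) (hi : i ∈ honest) (hiv : entered i v) :
    ∃ H : Finset Node, H ⊆ honest ∧ f + 1 ≤ H.card ∧ ∀ j ∈ H, entered j (v - 1) :=
  stmt12_general f v hv V honest hbyz entered sentMsg hmsg hentry i hi hiv
end

section
/- Under Commit Moonshot's rules, if an honest node receives 2f+1 distinct commit messages for (B_k, v), then no timeout certificate for view v can ever exist. -/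
/-!
A commit certificate and a timeout certificate for the same view are two quorums of `2f+1`
among `3f+1` nodes. Removing the at most `f` Byzantine nodes from the first leaves `f+1` honest
committers, too many to avoid the second quorum; an honest node in both would have sent a
timeout for a view it had already left.
-/

namespace Finset

variable {α : Type*} [DecidableEq α]

lemma card_le_card_inter_add_card_sdiff {A V H : Finset α} (hA : A ⊆ V) :
    #A ≤ #(A ∩ H) + #(V \ H) :=
  calc #A = #(A ∩ H) + #(A \ H) := (card_inter_add_card_sdiff A H).symm
    _ ≤ #(A ∩ H) + #(V \ H) := by gcongr

lemma exists_common_mem_of_quorums {f : ℕ} {V H S T : Finset α} (hV : #V ≤ 3 * f + 1)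
    (hfaulty : #(V \ H) ≤ f) (hS : S ⊆ V) (hT : T ⊆ V) (hSc : 2 * f + 1 ≤ #S)
    (hTc : 2 * f + 1 ≤ #T) : ∃ i ∈ S, i ∈ T ∧ i ∈ H := by
  have hSH : f + 1 ≤ #(S ∩ H) := by
    have := card_le_card_inter_add_card_sdiff (H := H) hS
    omega
  obtain ⟨i, hi⟩ := inter_nonempty_of_card_lt_card_add_card
    (inter_subset_left.trans hS) hT (by omega : #V < #(S ∩ H) + #T)
  simp only [mem_inter] at hi
  exact ⟨i, hi.1.1, hi.2, hi.1.2⟩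

end Finset

theorem stmt13_general {Node : Type*} [DecidableEq Node] (f : ℕ)
    (V honest : Finset Node)
    (hV : V.card = 3 * f + 1)
    (hbyz : (V \ honest).card ≤ f)
    (sendsCommit recvCertLow sendsTimeout : Node → Prop)
    -- honest nodes send a commit message for (B_k, v) only if they received a
    -- certificate for B_k in view v while their timeout_view is less than v
    (h1 : ∀ i ∈ honest, sendsCommit i → recvCertLow i)
    -- such honest nodes enter view v+1 and thereafter never send a timeout for v
    (h2 : ∀ i ∈ honest, recvCertLow i → ¬ sendsTimeout i)
    (S : Finset Node) (hS : S ⊆ V) (hSc : 2 * f + 1 ≤ S.card)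
    (hcm : ∀ i ∈ S, sendsCommit i) :
    ¬ ∃ T : Finset Node, T ⊆ V ∧ 2 * f + 1 ≤ T.card ∧ ∀ i ∈ T, sendsTimeout i := by
  rintro ⟨T, hT, hTc, htm⟩
  obtain ⟨i, hiS, hiT, hi⟩ :=
    Finset.exists_common_mem_of_quorums hV.le hbyz hS hT hSc hTc
  exact h2 i hi (h1 i hi (hcm i hiS)) (htm i hiT)

/-- Commit Moonshot: if an honest node receives `2f+1` distinct commit messages for
`(B_k, v)`, then no timeout certificate for view `v` can ever exist. -/
theorem stmt13 {Node : Type*} [DecidableEq Node] (f : ℕ)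
    (V honest : Finset Node)
    (hV : V.card = 3 * f + 1)
    (hhon : honest ⊆ V)
    (hbyz : (V \ honest).card ≤ f)
    (sendsCommit recvCertLow sendsTimeout : Node → Prop)
    -- honest nodes send a commit message for (B_k, v) only if they received a
    -- certificate for B_k in view v while their timeout_view is less than v
    (h1 : ∀ i ∈ honest, sendsCommit i → recvCertLow i)
    -- such honest nodes enter view v+1 and thereafter never send a timeout for v
    (h2 : ∀ i ∈ honest, recvCertLow i → ¬ sendsTimeout i)
    (S : Finset Node) (hS : S ⊆ V) (hSc : 2 * f + 1 ≤ S.card)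
    (hcm : ∀ i ∈ S, sendsCommit i) :
    ¬ ∃ T : Finset Node, T ⊆ V ∧ 2 * f + 1 ≤ T.card ∧ ∀ i ∈ T, sendsTimeout i :=
  stmt13_general f V honest hV hbyz sendsCommit recvCertLow sendsTimeout h1 h2 S hS hSc hcm
end

section
/- Commit Moonshot safety base case: if an honest node collects 2f+1 commit messages for (B_k, v), then any block certified for view v+1 directly extends B_k. -/
/-!
Two quorums of size `2f+1` in a set of `3f+1` nodes meet in at least `f+1` nodes, hence in an
honest one. So the `2f+1` commit senders and any would-be timeout certificate for `v` share an
honest node, which is impossible: there is no timeout certificate for `v`, hence no fallback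
certificate for `v+1`. An optimistic or normal certificate for `v+1` contains an honest voter,
who only votes for a block whose parent is certified in `v`, and that parent must be `B_k`.
-/

open Finset

namespace Finset

variable {α : Type*} [DecidableEq α]

lemma exists_mem_of_card_sdiff_lt {V H Q : Finset α} (hQ : Q ⊆ V) (hlt : #(V \ H) < #Q) :
    ∃ i ∈ Q, i ∈ H := by
  obtain ⟨i, hiQ, hi⟩ := exists_mem_notMem_of_card_lt_card hlt
  exact ⟨i, hiQ, by simpa [hQ hiQ] using hi⟩

lemma card_add_card_le_card_add_card_inter {V S T : Finset α} (hS : S ⊆ V) (hT : T ⊆ V) :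
    #S + #T ≤ #V + #(S ∩ T) := by
  have := card_le_card (union_subset hS hT)
  have := card_union_add_card_inter S T
  omega

lemma exists_mem_inter_of_two_quorums {f : ℕ} {V H S T : Finset α} (hV : #V = 3 * f + 1)
    (hbyz : #(V \ H) ≤ f) (hS : S ⊆ V) (hSc : 2 * f + 1 ≤ #S) (hT : T ⊆ V)
    (hTc : 2 * f + 1 ≤ #T) : ∃ i ∈ S ∩ T, i ∈ H := by
  have := card_add_card_le_card_add_card_inter hS hT
  exact exists_mem_of_card_sdiff_lt (inter_subset_left.trans hS) (by omega)

end Finset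

theorem stmt14_general {Node Block : Type*} [DecidableEq Node] (f : ℕ)
    (V honest : Finset Node)
    (hV : V.card = 3 * f + 1)
    (hbyz : (V \ honest).card ≤ f)
    (parent : Block → Option Block)
    (sendsCommit sendsTimeout : Node → Prop)          -- commit messages for (B_k, v), timeouts for v
    (optVote normVote fbVote : Node → Block → Prop)   -- votes for view v+1
    (certV : Block → Prop)                            -- certified for view v
    (Bk : Block)
    (huniqV : ∀ B, certV B → B = Bk)                  -- per-view uniqueness for view v
    (S : Finset Node) (hS : S ⊆ V) (hSc : 2 * f + 1 ≤ S.card)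
    (hcm : ∀ i ∈ S, sendsCommit i)
    -- honest commit-senders never send a timeout for v
    (hct : ∀ i ∈ honest, sendsCommit i → ¬ sendsTimeout i)
    -- honest fallback votes for v+1 require a timeout certificate for v
    (hfb : ∀ i ∈ honest, ∀ B, fbVote i B →
        ∃ T : Finset Node, T ⊆ V ∧ 2 * f + 1 ≤ T.card ∧ ∀ j ∈ T, sendsTimeout j)
    -- honest optimistic/normal votes in v+1 only for blocks whose parent is certified in v
    (hparent : ∀ i ∈ honest, ∀ B, optVote i B ∨ normVote i B →
        ∃ Bp, certV Bp ∧ parent B = some Bp)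
    (B' : Block)
    (hcert' :
        (∃ Q : Finset Node, Q ⊆ V ∧ 2 * f + 1 ≤ Q.card ∧ ∀ i ∈ Q, optVote i B') ∨
        (∃ Q : Finset Node, Q ⊆ V ∧ 2 * f + 1 ≤ Q.card ∧ ∀ i ∈ Q, normVote i B') ∨
        (∃ Q : Finset Node, Q ⊆ V ∧ 2 * f + 1 ≤ Q.card ∧ ∀ i ∈ Q, fbVote i B')) :
    parent B' = some Bk := by
  have no_timeout_cert : ∀ T ⊆ V, 2 * f + 1 ≤ #T → ¬ ∀ j ∈ T, sendsTimeout j := by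
    intro T hT hTc hTt
    obtain ⟨j, hj, hjh⟩ := exists_mem_inter_of_two_quorums hV hbyz hS hSc hT hTc
    exact hct j hjh (hcm j (mem_inter.1 hj).1) (hTt j (mem_inter.1 hj).2)
  have extends_Bk : ∀ i ∈ honest, optVote i B' ∨ normVote i B' → parent B' = some Bk := by
    intro i hi hv
    obtain ⟨Bp, hBp, hpar⟩ := hparent i hi B' hv
    rwa [huniqV Bp hBp] at hpar
  rcases hcert' with ⟨Q, hQ, hQc, hv⟩ | ⟨Q, hQ, hQc, hv⟩ | ⟨Q, hQ, hQc, hv⟩ <;>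
    obtain ⟨i, hiQ, hi⟩ := exists_mem_of_card_sdiff_lt (H := honest) hQ (by omega)
  · exact extends_Bk i hi (.inl (hv i hiQ))
  · exact extends_Bk i hi (.inr (hv i hiQ))
  · obtain ⟨T, hT, hTc, hTt⟩ := hfb i hi B' (hv i hiQ)
    exact (no_timeout_cert T hT hTc hTt).elim

/-- Commit Moonshot safety base case: if an honest node collects `2f+1` commit messages
for `(B_k, v)`, then any block certified for view `v+1` directly extends `B_k`. -/
theorem stmt14 {Node Block : Type*} [DecidableEq Node] (f : ℕ)
    (V honest : Finset Node)
    (hV : V.card = 3 * f + 1)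
    (hhon : honest ⊆ V)
    (hbyz : (V \ honest).card ≤ f)
    (parent : Block → Option Block)
    (sendsCommit sendsTimeout : Node → Prop)          -- commit messages for (B_k, v), timeouts for v
    (optVote normVote fbVote : Node → Block → Prop)   -- votes for view v+1
    (certV : Block → Prop)                            -- certified for view v
    (Bk : Block)
    (hBk : certV Bk)
    (huniqV : ∀ B, certV B → B = Bk)                  -- per-view uniqueness for view v
    (S : Finset Node) (hS : S ⊆ V) (hSc : 2 * f + 1 ≤ S.card)
    (hcm : ∀ i ∈ S, sendsCommit i)
    -- honest commit-senders never send a timeout for v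
    (hct : ∀ i ∈ honest, sendsCommit i → ¬ sendsTimeout i)
    -- honest fallback votes for v+1 require a timeout certificate for v
    (hfb : ∀ i ∈ honest, ∀ B, fbVote i B →
        ∃ T : Finset Node, T ⊆ V ∧ 2 * f + 1 ≤ T.card ∧ ∀ j ∈ T, sendsTimeout j)
    -- honest optimistic/normal votes in v+1 only for blocks whose parent is certified in v
    (hparent : ∀ i ∈ honest, ∀ B, optVote i B ∨ normVote i B →
        ∃ Bp, certV Bp ∧ parent B = some Bp)
    (B' : Block)
    (hcert' :
        (∃ Q : Finset Node, Q ⊆ V ∧ 2 * f + 1 ≤ Q.card ∧ ∀ i ∈ Q, optVote i B') ∨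
        (∃ Q : Finset Node, Q ⊆ V ∧ 2 * f + 1 ≤ Q.card ∧ ∀ i ∈ Q, normVote i B') ∨
        (∃ Q : Finset Node, Q ⊆ V ∧ 2 * f + 1 ≤ Q.card ∧ ∀ i ∈ Q, fbVote i B')) :
    parent B' = some Bk :=
  stmt14_general f V honest hV hbyz parent sendsCommit sendsTimeout optVote normVote fbVote certV Bk
    huniqV S hS hSc hcm hct hfb hparent B' hcert'
end

section
/- If a block B_h at height h proposed for view v' is committable (its child is certified for view v'+1), then at least f+1 honest nodes possessed the certificate C_{v'}(B_h) before sending any timeout for views ≥ v'+1, and consequently the highest-ranked certificate in any timeout certificate for any view ≥ v'+1 certifies a block extending B_h, provided every certificate of rank ≥ v' certifies a block extending B_h. -/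
/-!
Of the `2f+1` voters for the child of `B_h` at most `f` are Byzantine. Each honest voter
received `C_{v'}(B_h)` before voting, and voted before any timeout for a later view, so its
timeouts carry a certificate of rank `≥ v'`. Among `3f+1` nodes, any `2f+1` timeout senders
meet these `f+1` honest voters, so the highest certificate of a timeout certificate has rank
`≥ v'` and therefore certifies a block extending `B_h`.
-/

open Finset

theorem Finset.card_le_card_inter_add_of_card_sdiff_le {α : Type*} [DecidableEq α]
    {S V H : Finset α} {f : ℕ} (hS : S ⊆ V) (hout : #(V \ H) ≤ f) :
    #S ≤ #(S ∩ H) + f := by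
  have hSout : #(S \ H) ≤ f := (card_le_card (sdiff_subset_sdiff hS le_rfl)).trans hout
  have := card_inter_add_card_sdiff S H
  omega

theorem stmt17_general {Node Cert Block : Type*} [DecidableEq Node] [DecidableEq Cert] (f v' : ℕ)
    (V honest : Finset Node)
    (hV : V.card = 3 * f + 1)
    (hhon : honest ⊆ V)
    (hbyz : (V \ honest).card ≤ f)
    (ext : Block → Block → Prop)
    (rank : Cert → ℕ) (blockOf : Cert → Block)
    (Bh Bc : Block) (Cv' : Cert)
    (hCrank : rank Cv' = v')
    (votesAt : Node → ℕ → Block → ℝ → Prop)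
    (recvCertAt : Node → Cert → ℝ → Prop)
    (sendsTAt : Node → ℕ → Cert → ℝ → Prop)  -- timeout for a view carrying a certificate
    -- the child Bc is certified for view v'+1: 2f+1 votes
    (S : Finset Node) (hS : S ⊆ V) (hSc : 2 * f + 1 ≤ S.card)
    (hvotes : ∀ i ∈ S, ∃ s : ℝ, votesAt i (v' + 1) Bc s)
    -- honest nodes vote for a block only after receiving the certificate of its parent
    (hvoteRecv : ∀ i ∈ honest, ∀ s : ℝ, votesAt i (v' + 1) Bc s →
        ∃ s' ≤ s, recvCertAt i Cv' s')
    -- honest timeouts for views ≥ v'+1 are sent only after voting in v'+1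
    (hvoteBeforeT : ∀ i ∈ honest, ∀ (s s' : ℝ) (w : ℕ) (c : Cert),
        votesAt i (v' + 1) Bc s → v' + 1 ≤ w → sendsTAt i w c s' → s ≤ s')
    -- honest timeout messages carry the sender's highest-ranked certificate seen so far
    (hcarry : ∀ i ∈ honest, ∀ (w : ℕ) (c : Cert) (s : ℝ), sendsTAt i w c s →
        ∀ (c' : Cert) (s' : ℝ), s' ≤ s → recvCertAt i c' s' → rank c' ≤ rank c)
    -- every certificate of rank ≥ v' certifies a block extending B_h
    (hextend : ∀ c : Cert, v' ≤ rank c → ext (blockOf c) Bh) :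
    (∃ H : Finset Node, H ⊆ honest ∧ f + 1 ≤ H.card ∧
        ∀ i ∈ H, ∀ w, v' + 1 ≤ w → ∀ (c : Cert) (s : ℝ), sendsTAt i w c s →
          ∃ s' ≤ s, recvCertAt i Cv' s') ∧
    (∀ w, v' + 1 ≤ w → ∀ T : Finset Node, T ⊆ V → 2 * f + 1 ≤ T.card →
        ∀ cf : Node → Cert, (∀ i ∈ T, ∃ s : ℝ, sendsTAt i w (cf i) s) →
        ∀ c' ∈ T.image cf, (∀ i ∈ T, rank (cf i) ≤ rank c') → ext (blockOf c') Bh) := by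
  have hHcard : f + 1 ≤ #(S ∩ honest) := by
    have := card_le_card_inter_add_of_card_sdiff_le hS hbyz
    omega
  set H := S ∩ honest
  have hH : H ⊆ honest := inter_subset_right
  have holds : ∀ i ∈ H, ∀ w, v' + 1 ≤ w → ∀ (c : Cert) (s : ℝ), sendsTAt i w c s →
      ∃ s' ≤ s, recvCertAt i Cv' s' := by
    intro i hi w hw c s hsend
    obtain ⟨t, hvote⟩ := hvotes i (mem_inter.1 hi).1
    obtain ⟨t', ht't, hrecv⟩ := hvoteRecv i (hH hi) t hvote
    exact ⟨t', ht't.trans (hvoteBeforeT i (hH hi) t s w c hvote hw hsend), hrecv⟩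
  refine ⟨⟨H, hH, hHcard, holds⟩, ?_⟩
  intro w hw T hT hTc cf hsends c' _ hmax
  obtain ⟨i, hi⟩ : (T ∩ H).Nonempty :=
    inter_nonempty_of_card_lt_card_add_card hT (hH.trans hhon) (by omega)
  obtain ⟨hiT, hiH⟩ := mem_inter.1 hi
  obtain ⟨s, hsend⟩ := hsends i hiT
  obtain ⟨s', hs's, hrecv⟩ := holds i hiH w hw (cf i) s hsend
  have hcarried : rank Cv' ≤ rank (cf i) :=
    hcarry i (hH hiH) w (cf i) s hsend Cv' s' hs's hrecv
  exact hextend c' (by have := hmax i hiT; omega)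

/-- If a block `B_h` proposed for view `v'` is committable (its child is certified for
view `v'+1`), then at least `f+1` honest nodes possessed `C_{v'}(B_h)` before sending any
timeout for views `≥ v'+1`, and consequently the highest-ranked certificate in any
timeout certificate for any view `≥ v'+1` certifies a block extending `B_h`, provided
every certificate of rank `≥ v'` certifies a block extending `B_h`. -/
theorem stmt17 {Node Cert Block : Type*} [DecidableEq Node] [DecidableEq Cert] (f v' : ℕ)
    (V honest : Finset Node)
    (hV : V.card = 3 * f + 1)
    (hhon : honest ⊆ V)
    (hbyz : (V \ honest).card ≤ f)
    (parent : Block → Option Block)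
    (ext : Block → Block → Prop)
    (hext : ext = Relation.ReflTransGen (fun a b => parent a = some b))
    (rank : Cert → ℕ) (blockOf : Cert → Block)
    (Bh Bc : Block) (Cv' : Cert)
    (hCrank : rank Cv' = v') (hCblock : blockOf Cv' = Bh)
    (hchild : parent Bc = some Bh)
    (votesAt : Node → ℕ → Block → ℝ → Prop)
    (recvCertAt : Node → Cert → ℝ → Prop)
    (sendsTAt : Node → ℕ → Cert → ℝ → Prop)  -- timeout for a view carrying a certificate
    -- the child Bc is certified for view v'+1: 2f+1 votes
    (S : Finset Node) (hS : S ⊆ V) (hSc : 2 * f + 1 ≤ S.card)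
    (hvotes : ∀ i ∈ S, ∃ s : ℝ, votesAt i (v' + 1) Bc s)
    -- honest nodes vote for a block only after receiving the certificate of its parent
    (hvoteRecv : ∀ i ∈ honest, ∀ s : ℝ, votesAt i (v' + 1) Bc s →
        ∃ s' ≤ s, recvCertAt i Cv' s')
    -- honest timeouts for views ≥ v'+1 are sent only after voting in v'+1
    (hvoteBeforeT : ∀ i ∈ honest, ∀ (s s' : ℝ) (w : ℕ) (c : Cert),
        votesAt i (v' + 1) Bc s → v' + 1 ≤ w → sendsTAt i w c s' → s ≤ s')
    -- honest timeout messages carry the sender's highest-ranked certificate seen so far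
    (hcarry : ∀ i ∈ honest, ∀ (w : ℕ) (c : Cert) (s : ℝ), sendsTAt i w c s →
        ∀ (c' : Cert) (s' : ℝ), s' ≤ s → recvCertAt i c' s' → rank c' ≤ rank c)
    -- every certificate of rank ≥ v' certifies a block extending B_h
    (hextend : ∀ c : Cert, v' ≤ rank c → ext (blockOf c) Bh) :
    (∃ H : Finset Node, H ⊆ honest ∧ f + 1 ≤ H.card ∧
        ∀ i ∈ H, ∀ w, v' + 1 ≤ w → ∀ (c : Cert) (s : ℝ), sendsTAt i w c s →
          ∃ s' ≤ s, recvCertAt i Cv' s') ∧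
    (∀ w, v' + 1 ≤ w → ∀ T : Finset Node, T ⊆ V → 2 * f + 1 ≤ T.card →
        ∀ cf : Node → Cert, (∀ i ∈ T, ∃ s : ℝ, sendsTAt i w (cf i) s) →
        ∀ c' ∈ T.image cf, (∀ i ∈ T, rank (cf i) ≤ rank c') → ext (blockOf c') Bh) :=
  stmt17_general f v' V honest hV hhon hbyz ext rank blockOf Bh Bc Cv' hCrank votesAt recvCertAt
    sendsTAt S hS hSc hvotes hvoteRecv hvoteBeforeT hcarry hextend
end
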